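/- Let A = V Λ Vᵀ and Σ = V K Vᵀ be simultaneously diagonalizable symmetric matrices with Σ positive definite, Λ = diag(λ₁,…,λₙ), K = diag(κ₁,…,κₙ), and suppose the values |λᵢ|/√κᵢ are sorted in decreasing order. Then for any 1 ≤ k ≤ n and W = (W̃_k, 0_{k×(n-k)})Vᵀ with W̃_k any invertible k×k orthogonal matrix, the coarse-grained causal emergence Δ𝒥 = ln(|det(WAW†)|^{1/k}/|det(WΣWᵀ)|^{1/2k}) - ln(|det A|^{1/n}/|det Σ|^{1/2n}) equals (1/k)∑_{i=1}^k ln(|λᵢ|/√κᵢ) - (1/n)∑_{i=1}^n ln(|λᵢ|/√κᵢ). -/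

import Mathlib

open Real Matrix

/-- The coarse-grained causal emergence for simultaneously diagonalizable A and Σ
    with a spectral coarse-graining equals a difference of averaged log singular ratios. -/
theorem causal_emergence_simultaneous_diag (n k : ℕ) (hk : 1 ≤ k) (hkn : k ≤ n)
    (V : Matrix (Fin n) (Fin n) ℝ) (lam kap : Fin n → ℝ)
    (Wt : Matrix (Fin k) (Fin k) ℝ)
    (hV1 : V * Vᵀ = 1) (hV2 : Vᵀ * V = 1)
    (hWt1 : Wt * Wtᵀ = 1) (hWt2 : Wtᵀ * Wt = 1)
    (hlam : ∀ i, lam i ≠ 0) (hkap : ∀ i, 0 < kap i)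
    (hsort : ∀ i j : Fin n, i ≤ j →
      |lam j| / Real.sqrt (kap j) ≤ |lam i| / Real.sqrt (kap i))
    (A S : Matrix (Fin n) (Fin n) ℝ) (W : Matrix (Fin k) (Fin n) ℝ)
    (hA : A = V * Matrix.diagonal lam * Vᵀ)
    (hS : S = V * Matrix.diagonal kap * Vᵀ)
    (hW : W = (Matrix.of fun (i : Fin k) (j : Fin n) =>
        if h : (j : ℕ) < k then Wt i ⟨j, h⟩ else 0) * Vᵀ) :
    Real.log (|(W * A * Wᵀ).det| ^ ((1 : ℝ) / k) / |(W * S * Wᵀ).det| ^ ((1 : ℝ) / (2 * k)))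
      - Real.log (|A.det| ^ ((1 : ℝ) / n) / |S.det| ^ ((1 : ℝ) / (2 * n)))
    = (1 / (k : ℝ)) * ∑ i : Fin k,
        Real.log (|lam (Fin.castLE hkn i)| / Real.sqrt (kap (Fin.castLE hkn i)))
      - (1 / (n : ℝ)) * ∑ i : Fin n, Real.log (|lam i| / Real.sqrt (kap i)) := by
  have hn : 1 ≤ n := le_trans hk hkn
  have hkR : (k : ℝ) ≠ 0 := Nat.cast_ne_zero.mpr (by omega)
  have hnR : (n : ℝ) ≠ 0 := Nat.cast_ne_zero.mpr (by omega)
  have hDetV : V.det * Vᵀ.det = 1 := by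
    have := congrArg Matrix.det hV1
    rwa [Matrix.det_mul, Matrix.det_one] at this
  have hDetWt : Wt.det * Wtᵀ.det = 1 := by
    have := congrArg Matrix.det hWt1
    rwa [Matrix.det_mul, Matrix.det_one] at this
  -- selection matrix
  set E : Matrix (Fin k) (Fin n) ℝ :=
    Matrix.of (fun (l : Fin k) (j : Fin n) => if (j : ℕ) = (l : ℕ) then 1 else 0) with hE
  have hPE : (Matrix.of fun (i : Fin k) (j : Fin n) =>
        if h : (j : ℕ) < k then Wt i ⟨j, h⟩ else 0) = Wt * E := by
    ext i j
    rw [Matrix.mul_apply]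
    by_cases h : (j : ℕ) < k
    · rw [Finset.sum_eq_single (⟨(j : ℕ), h⟩ : Fin k)]
      · simp [hE, h]
      · intro b _ hb
        simp only [hE, Matrix.of_apply]
        rw [if_neg, mul_zero]
        intro hjb
        exact hb (Fin.ext hjb.symm)
      · intro hmem; exact absurd (Finset.mem_univ _) hmem
    · simp only [Matrix.of_apply, dif_neg h]
      refine (Finset.sum_eq_zero ?_).symm
      intro b _
      rw [hE]
      simp only [Matrix.of_apply]
      rw [if_neg, mul_zero]
      intro hjb
      exact h (hjb ▸ b.isLt)
  have hEDE : ∀ d : Fin n → ℝ, E * Matrix.diagonal d * Eᵀ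
      = Matrix.diagonal (fun i : Fin k => d (Fin.castLE hkn i)) := by
    intro d
    ext l l'
    rw [Matrix.mul_apply]
    simp only [Matrix.mul_diagonal, Matrix.transpose_apply]
    rw [Finset.sum_eq_single (Fin.castLE hkn l)]
    · have hcast : ((Fin.castLE hkn l : Fin n) : ℕ) = (l : ℕ) := rfl
      simp only [hE, Matrix.of_apply, Matrix.diagonal_apply, hcast, if_pos rfl, one_mul]
      by_cases h : l = l'
      · simp [h]
      · rw [if_neg (fun hc => h (Fin.ext hc)), if_neg h, mul_zero]
    · intro b _ hb
      simp only [hE, Matrix.of_apply]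
      rw [if_neg, zero_mul, zero_mul]
      intro hc
      exact hb (by rw [Fin.ext_iff, Fin.coe_castLE]; exact hc)
    · intro hmem; exact absurd (Finset.mem_univ _) hmem
  have hcancel : ∀ X : Matrix (Fin n) (Fin k) ℝ, Vᵀ * (V * X) = X := by
    intro X; rw [← Matrix.mul_assoc, hV2, Matrix.one_mul]
  have hWDW : ∀ d : Fin n → ℝ,
      W * (V * Matrix.diagonal d * Vᵀ) * Wᵀ
        = Wt * Matrix.diagonal (fun i : Fin k => d (Fin.castLE hkn i)) * Wtᵀ := by
    intro d
    rw [hW, hPE]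
    have h1 : (Wt * E * Vᵀ)ᵀ = V * (Eᵀ * Wtᵀ) := by
      rw [Matrix.transpose_mul, Matrix.transpose_mul, Matrix.transpose_transpose]
    rw [h1]
    calc Wt * E * Vᵀ * (V * Matrix.diagonal d * Vᵀ) * (V * (Eᵀ * Wtᵀ))
        = Wt * (E * (Vᵀ * (V * (Matrix.diagonal d * (Vᵀ * (V * (Eᵀ * Wtᵀ))))))) := by
          simp only [Matrix.mul_assoc]
      _ = Wt * (E * (Matrix.diagonal d * (Eᵀ * Wtᵀ))) := by rw [hcancel, hcancel]
      _ = Wt * Matrix.diagonal (fun i : Fin k => d (Fin.castLE hkn i)) * Wtᵀ := by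
          rw [← hEDE d]; simp only [Matrix.mul_assoc]
  have hdetk : ∀ d : Fin k → ℝ, (Wt * Matrix.diagonal d * Wtᵀ).det = ∏ i, d i := by
    intro d
    rw [Matrix.det_mul, Matrix.det_mul, Matrix.det_diagonal]
    linear_combination (∏ i, d i) * hDetWt
  have hdetn : ∀ d : Fin n → ℝ, (V * Matrix.diagonal d * Vᵀ).det = ∏ i, d i := by
    intro d
    rw [Matrix.det_mul, Matrix.det_mul, Matrix.det_diagonal]
    linear_combination (∏ i, d i) * hDetV
  have hdWA : (W * A * Wᵀ).det = ∏ i : Fin k, lam (Fin.castLE hkn i) := by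
    rw [hA, hWDW, hdetk]
  have hdWS : (W * S * Wᵀ).det = ∏ i : Fin k, kap (Fin.castLE hkn i) := by
    rw [hS, hWDW, hdetk]
  have hdA : A.det = ∏ i, lam i := by rw [hA, hdetn]
  have hdS : S.det = ∏ i, kap i := by rw [hS, hdetn]
  -- positivity facts
  have habsWA : |(W * A * Wᵀ).det| = ∏ i : Fin k, |lam (Fin.castLE hkn i)| := by
    rw [hdWA, Finset.abs_prod]
  have habsA : |A.det| = ∏ i, |lam i| := by rw [hdA, Finset.abs_prod]
  have hposWA : 0 < ∏ i : Fin k, |lam (Fin.castLE hkn i)| :=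
    Finset.prod_pos fun i _ => abs_pos.mpr (hlam _)
  have hposA : 0 < ∏ i, |lam i| := Finset.prod_pos fun i _ => abs_pos.mpr (hlam _)
  have hposWS : 0 < ∏ i : Fin k, kap (Fin.castLE hkn i) :=
    Finset.prod_pos fun i _ => hkap _
  have hposS : 0 < ∏ i, kap i := Finset.prod_pos fun i _ => hkap _
  have habsWS : |(W * S * Wᵀ).det| = ∏ i : Fin k, kap (Fin.castLE hkn i) := by
    rw [hdWS, abs_of_pos hposWS]
  have habsS : |S.det| = ∏ i, kap i := by rw [hdS, abs_of_pos hposS]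
  rw [habsWA, habsWS, habsA, habsS]
  rw [Real.log_div (by positivity) (by positivity),
    Real.log_div (by positivity) (by positivity),
    Real.log_rpow hposWA, Real.log_rpow hposWS, Real.log_rpow hposA, Real.log_rpow hposS,
    Real.log_prod (fun i _ => abs_ne_zero.mpr (hlam _)),
    Real.log_prod (fun i _ => (hkap (Fin.castLE hkn i)).ne'),
    Real.log_prod (fun i _ => abs_ne_zero.mpr (hlam _)),
    Real.log_prod (fun i _ => (hkap i).ne')]
  have hsplit : ∀ (m : ℕ) (f : Fin m → Fin n),
      ∑ i : Fin m, Real.log (|lam (f i)| / Real.sqrt (kap (f i)))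
        = ∑ i : Fin m, Real.log |lam (f i)| - (1/2) * ∑ i : Fin m, Real.log (kap (f i)) := by
    intro m f
    rw [Finset.mul_sum, ← Finset.sum_sub_distrib]
    refine Finset.sum_congr rfl fun i _ => ?_
    rw [Real.log_div (abs_ne_zero.mpr (hlam _)) (Real.sqrt_ne_zero'.mpr (hkap _)),
      Real.log_sqrt (hkap _).le]
    ring
  have h1 := hsplit k (Fin.castLE hkn)
  have h2 := hsplit n id
  simp only [id] at h2
  rw [h1, h2]
  field_simp
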